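/- For all x > 0, ψ(1/log(1 + 1/x)) < log x < ψ(x + 1/2), where ψ is the digamma function. -/

import Mathlib

/-!
Both inequalities say that a function `f` is negative, where `f y = log y - ψ (y + 1/2)` for the
upper bound and `f y = ψ y + log (exp (1/y) - 1)` for the lower one (at `y = 1 / log (1 + 1/x)`).
By `ψ (y + 1) = ψ y + 1/y` each `f` strictly increases under `y ↦ y + 1`, which reduces to the
elementary inequalities `1 / (y + 1/2) < log (1 + 1/y)` and `2 < exp (-1/y) + exp (1/(y + 1))`;
and the convexity of `log ∘ Γ` gives `log (y - 1) ≤ ψ y ≤ log y`, so `f` is bounded above by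
something tending to `0`. Hence `f x < f (x + n) ≤ o(1)`.
-/

noncomputable def digamma : ℝ → ℝ := deriv (fun y : ℝ => Real.log (Real.Gamma y))

open Real Set Filter Topology

theorem lt_of_lt_add_one_of_le_of_tendsto {f g : ℝ → ℝ} {x c : ℝ}
    (hstep : ∀ y, x ≤ y → f y < f (y + 1)) (hle : ∀ᶠ y in atTop, f y ≤ g y)
    (hg : Tendsto g atTop (𝓝 c)) : f x < c := by
  have hmono : StrictMono fun n : ℕ ↦ f (x + n) :=
    strictMono_nat_of_lt_succ fun n ↦ by
      simpa [add_assoc] using hstep (x + n) (le_add_of_nonneg_right n.cast_nonneg)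
  have htends : Tendsto (fun n : ℕ ↦ x + n) atTop atTop :=
    tendsto_atTop_add_const_left _ _ tendsto_natCast_atTop_atTop
  have hle_c : f (x + 1) ≤ c := by
    refine ge_of_tendsto (hg.comp htends) ?_
    filter_upwards [htends.eventually hle, eventually_ge_atTop 1] with n hn h1
    exact (by simpa using hmono.monotone h1 : f (x + 1) ≤ f (x + n)).trans hn
  exact (by simpa using hmono zero_lt_one : f x < f (x + 1)).trans_le hle_c

lemma differentiableAt_log_Gamma {x : ℝ} (hx : 0 < x) :
    DifferentiableAt ℝ (fun y ↦ log (Gamma y)) x :=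
  have hx' : ∀ m : ℕ, x ≠ -m := fun m ↦ (neg_nonpos.2 m.cast_nonneg).trans_lt hx |>.ne'
  (differentiableAt_Gamma hx').log (Gamma_ne_zero hx')

lemma log_Gamma_add_one {x : ℝ} (hx : 0 < x) :
    log (Gamma (x + 1)) = log x + log (Gamma x) := by
  rw [Gamma_add_one hx.ne', log_mul hx.ne' (Gamma_pos_of_pos hx).ne']

lemma digamma_add_one {x : ℝ} (hx : 0 < x) : digamma (x + 1) = digamma x + x⁻¹ := by
  rw [digamma, ← deriv_comp_add_const, ← deriv_log,
    ← deriv_add (differentiableAt_log_Gamma hx) (differentiableAt_log hx.ne')]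
  refine EventuallyEq.deriv_eq ?_
  filter_upwards [eventually_gt_nhds hx] with y hy
  rw [log_Gamma_add_one hy, add_comm]
  rfl

lemma slope_log_Gamma_add_one {x : ℝ} (hx : 0 < x) :
    slope (fun y ↦ log (Gamma y)) x (x + 1) = log x := by
  simp [slope_def_field, log_Gamma_add_one hx]

lemma digamma_le_log {x : ℝ} (hx : 0 < x) : digamma x ≤ log x :=
  slope_log_Gamma_add_one hx ▸ convexOn_log_Gamma.deriv_le_slope hx
    (mem_Ioi.2 (by linarith)) (lt_add_one x) (differentiableAt_log_Gamma hx)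

lemma log_le_digamma_add_one {x : ℝ} (hx : 0 < x) : log x ≤ digamma (x + 1) :=
  slope_log_Gamma_add_one hx ▸ convexOn_log_Gamma.slope_le_deriv hx
    (mem_Ioi.2 (by linarith)) (lt_add_one x) (differentiableAt_log_Gamma (by linarith))

lemma inv_add_half_lt_log_one_add_inv {y : ℝ} (hy : 0 < y) :
    (y + 1 / 2)⁻¹ < log (1 + y⁻¹) := by
  set a : ℕ → ℝ := fun k ↦ 2 * (1 / (2 * k + 1)) * (1 / (2 * y + 1)) ^ (2 * k + 1)
  have ha : ∀ k, 0 < a k := fun k ↦ by positivity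
  calc (y + 1 / 2)⁻¹ < a 0 + a 1 := by
        refine lt_add_of_le_of_pos (le_of_eq ?_) (ha 1)
        have : 2 * y + 1 ≠ 0 := by positivity
        simp [a]
        field_simp
    _ = ∑ k ∈ Finset.range 2, a k := by simp [Finset.sum_range_succ]
    _ ≤ log (1 + y⁻¹) := sum_le_hasSum _ (fun k _ ↦ (ha k).le) (hasSum_log_one_add_inv hy)

lemma log_sub_digamma_add_half_lt {y : ℝ} (hy : 0 < y) :
    log y - digamma (y + 1 / 2) < log (y + 1) - digamma (y + 1 + 1 / 2) := by
  have hlog : log (y + 1) - log y = log (1 + y⁻¹) := by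
    rw [← log_div (by linarith) hy.ne']
    field_simp
  rw [add_right_comm, digamma_add_one (by linarith)]
  linarith [inv_add_half_lt_log_one_add_inv hy]

lemma log_sub_digamma_add_half_le {y : ℝ} (hy : 1 / 2 < y) :
    log y - digamma (y + 1 / 2) ≤ log y - log (y - 1 / 2) := by
  have := log_le_digamma_add_one (sub_pos.2 hy)
  rw [show y - 1 / 2 + 1 = y + 1 / 2 by ring] at this
  linarith

theorem log_lt_digamma_add_half {x : ℝ} (hx : 0 < x) : log x < digamma (x + 1 / 2) := by
  have hlim : Tendsto (fun y ↦ log y - log (y - 1 / 2)) atTop (𝓝 0) := by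
    simpa [sub_eq_add_neg] using (tendsto_log_comp_add_sub_log (-(1 / 2))).neg
  have := lt_of_lt_add_one_of_le_of_tendsto (f := fun y ↦ log y - digamma (y + 1 / 2))
    (fun y hy ↦ log_sub_digamma_add_half_lt (hx.trans_le hy))
    ((eventually_gt_atTop (1 / 2)).mono fun y ↦ log_sub_digamma_add_half_le) hlim
  linarith

lemma two_lt_exp_one_sub_exp_add_exp_one_sub_exp_neg {t : ℝ} (ht : 0 < t) :
    2 < exp (1 - exp t) + exp (1 - exp (-t)) := by
  set φ : ℝ → ℝ := fun s ↦ exp (1 - exp s) + exp (1 - exp (-s))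
  have hderiv : ∀ s, HasDerivAt φ (exp (1 - s - exp (-s)) - exp (1 + s - exp s)) s := by
    intro s
    refine ((((hasDerivAt_exp s).const_sub 1).exp).add
      (((hasDerivAt_neg s).exp.const_sub 1).exp)).congr_deriv ?_
    rw [show 1 - s - exp (-s) = 1 - exp (-s) + -s by ring,
      show 1 + s - exp s = 1 - exp s + s by ring, exp_add, exp_add]
    ring
  have hmono : StrictMonoOn φ (Ici 0) := by
    refine strictMonoOn_of_deriv_pos (convex_Ici 0) (by fun_prop) fun s hs ↦ ?_
    rw [interior_Ici, mem_Ioi] at hs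
    have : s < sinh s := self_lt_sinh_iff.2 hs
    rw [(hderiv s).deriv, sub_pos, exp_lt_exp]
    linarith [sinh_eq s]
  simpa [φ, one_add_one_eq_two] using hmono self_mem_Ici ht.le ht

lemma two_lt_exp_neg_inv_add_exp_inv_add_one {y : ℝ} (hy : 0 < y) :
    2 < exp (-y⁻¹) + exp (y + 1)⁻¹ := by
  have hpos : 0 < 1 + y⁻¹ := by positivity
  have key := two_lt_exp_one_sub_exp_add_exp_one_sub_exp_neg
    (log_pos (lt_add_of_pos_right 1 (inv_pos.2 hy)))
  rw [exp_neg, exp_log hpos] at key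
  convert key using 3
  · ring
  · field_simp
    ring

lemma digamma_add_log_exp_inv_sub_one_lt {y : ℝ} (hy : 0 < y) :
    digamma y + log (exp y⁻¹ - 1) < digamma (y + 1) + log (exp (y + 1)⁻¹ - 1) := by
  have hexp : ∀ {z : ℝ}, 0 < z → 0 < exp z⁻¹ - 1 :=
    fun hz ↦ sub_pos.2 (one_lt_exp_iff.2 (inv_pos.2 hz))
  have key : exp y⁻¹ - 1 < exp y⁻¹ * (exp (y + 1)⁻¹ - 1) := by
    have := mul_lt_mul_of_pos_left (two_lt_exp_neg_inv_add_exp_inv_add_one hy) (exp_pos y⁻¹)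
    rw [mul_add, ← exp_add, add_neg_cancel, exp_zero] at this
    linarith
  have := log_lt_log (hexp hy) key
  rw [log_mul (exp_pos _).ne' (hexp (by linarith)).ne', log_exp] at this
  rw [digamma_add_one hy]
  linarith

lemma digamma_add_log_exp_inv_sub_one_le {y : ℝ} (hy : 0 < y) :
    digamma y + log (exp y⁻¹ - 1) ≤ y⁻¹ := by
  have hexp : exp y⁻¹ - 1 ≤ exp y⁻¹ * y⁻¹ :=
    calc exp y⁻¹ - 1 = exp y⁻¹ * (1 - exp (-y⁻¹)) := by rw [mul_sub, ← exp_add]; simp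
      _ ≤ exp y⁻¹ * y⁻¹ := by gcongr; linarith [add_one_le_exp (-y⁻¹)]
  have := log_le_log (sub_pos.2 (one_lt_exp_iff.2 (inv_pos.2 hy))) hexp
  rw [log_mul (exp_pos _).ne' (inv_pos.2 hy).ne', log_exp, log_inv] at this
  linarith [digamma_le_log hy]

theorem digamma_add_log_exp_inv_sub_one_neg {t : ℝ} (ht : 0 < t) :
    digamma t + log (exp t⁻¹ - 1) < 0 := by
  refine lt_of_lt_add_one_of_le_of_tendsto (f := fun y ↦ digamma y + log (exp y⁻¹ - 1))
    (fun y hy ↦ digamma_add_log_exp_inv_sub_one_lt (ht.trans_le hy)) ?_ tendsto_inv_atTop_zero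
  filter_upwards [eventually_gt_atTop 0] with y hy using digamma_add_log_exp_inv_sub_one_le hy

theorem digamma_log_bounds (x : ℝ) (hx : 0 < x) :
    digamma (1 / Real.log (1 + 1 / x)) < Real.log x ∧
      Real.log x < digamma (x + 1 / 2) := by
  refine ⟨?_, log_lt_digamma_add_half hx⟩
  have hlog : 0 < log (1 + x⁻¹) := log_pos (by simpa using hx)
  have := digamma_add_log_exp_inv_sub_one_neg (inv_pos.2 hlog)
  rw [inv_inv, exp_log (by positivity), add_sub_cancel_left, log_inv] at this
  simp only [one_div]
  linarith
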